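/- Let A, B, X be bounded linear operators on H. Then ber(A*XB) ≤ (1/√2) · ber(B*|X|B + i·A*|X*|A), where i denotes the imaginary unit. -/

import Mathlib

set_option synthInstance.maxHeartbeats 1000000
set_option maxHeartbeats 1000000

open scoped NNReal
open ContinuousLinearMap

/-- The Berezin number of an operator `T`, relative to the family `k` of
(normalized reproducing kernel) vectors indexed by `Ω`. -/
noncomputable def ber {H : Type*} [NormedAddCommGroup H] [InnerProductSpace ℂ H]
    {Ω : Type*} (k : Ω → H) (T : H →L[ℂ] H) : ℝ :=
  ⨆ lam : Ω, ‖(inner ℂ (T (k lam)) (k lam) : ℂ)‖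

/-- The absolute value `|T| = (T*T)^(1/2)` of a bounded operator. -/
noncomputable def opAbs {H : Type*} [NormedAddCommGroup H] [InnerProductSpace ℂ H]
    [CompleteSpace H] (T : H →L[ℂ] H) : H →L[ℂ] H :=
  CFC.sqrt (adjoint T * T)

/-!
Fix `λ` and put `u = B k̂_λ`, `v = A k̂_λ`, `a = ⟨|X| u, u⟩`, `b = ⟨|X*| v, v⟩ ≥ 0`. Then
`⟨A*XB k̂_λ, k̂_λ⟩ = ⟨X u, v⟩` and `⟨(B*|X|B + i A*|X*|A) k̂_λ, k̂_λ⟩ = a - i b`, so the claim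
follows from the mixed Schwarz inequality `|⟨X u, v⟩| ≤ √a √b` and `√(ab) ≤ √((a² + b²) / 2)`.

The mixed Schwarz inequality is reduced to the self-adjoint case through the operator
`Z = [[0, X*], [X, 0]]` on `H ⊕ H`: `|Z| = diag(|X|, |X*|)`, and for self-adjoint `Z` one
writes `Z = Z⁺ - Z⁻`, `|Z| = Z⁺ + Z⁻` and applies Cauchy–Schwarz to the positive forms
`⟨Z^± ·, ·⟩`.
-/

open scoped InnerProductSpace

section

variable {E : Type*} [NormedAddCommGroup E] [InnerProductSpace ℂ E]

theorem ContinuousLinearMap.inner_apply_self_eq_re_of_nonneg {P : E →L[ℂ] E} (hP : 0 ≤ P)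
    (x : E) : ⟪P x, x⟫_ℂ = (⟪P x, x⟫_ℂ).re :=
  Complex.eq_re_of_ofReal_le (r := 0) <| by
    simpa using ((nonneg_iff_isPositive P).mp hP).inner_nonneg_left x

theorem ContinuousLinearMap.norm_inner_le_sqrt_mul_sqrt_of_nonneg [CompleteSpace E]
    {P : E →L[ℂ] E} (hP : 0 ≤ P) (u v : E) :
    ‖⟪P u, v⟫_ℂ‖ ≤ √(⟪P u, u⟫_ℂ).re * √(⟪P v, v⟫_ℂ).re := by
  obtain ⟨S, rfl⟩ := CStarAlgebra.nonneg_iff_eq_star_mul_self.mp hP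
  have hinner (x y : E) : ⟪(star S * S) x, y⟫_ℂ = ⟪S x, S y⟫_ℂ :=
    adjoint_inner_left S y (S x)
  have hsqrt (x : E) : √(⟪(star S * S) x, x⟫_ℂ).re = ‖S x‖ := by
    have : (⟪S x, S x⟫_ℂ).re = ‖S x‖ ^ 2 := inner_self_eq_norm_sq (𝕜 := ℂ) (S x)
    rw [hinner, this, Real.sqrt_sq (norm_nonneg _)]
  rw [hinner, hsqrt, hsqrt]
  exact norm_inner_le_norm _ _

theorem IsSelfAdjoint.norm_inner_le_sqrt_mul_sqrt_abs [CompleteSpace E] {Z : E →L[ℂ] E}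
    (hZ : IsSelfAdjoint Z) (w w' : E) :
    ‖⟪Z w, w'⟫_ℂ‖ ≤ √(⟪CFC.abs Z w, w⟫_ℂ).re * √(⟪CFC.abs Z w', w'⟫_ℂ).re := by
  have hpos := CFC.posPart_nonneg Z
  have hneg := CFC.negPart_nonneg Z
  have hre_nonneg {P : E →L[ℂ] E} (hP : 0 ≤ P) (x : E) : 0 ≤ (⟪P x, x⟫_ℂ).re :=
    ((nonneg_iff_isPositive P).mp hP).re_inner_nonneg_left x
  have habs (x : E) : (⟪CFC.abs Z x, x⟫_ℂ).re = (⟪Z⁺ x, x⟫_ℂ).re + (⟪Z⁻ x, x⟫_ℂ).re := by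
    rw [← CFC.posPart_add_negPart Z, add_apply, inner_add_left, Complex.add_re]
  calc ‖⟪Z w, w'⟫_ℂ‖ = ‖⟪Z⁺ w, w'⟫_ℂ - ⟪Z⁻ w, w'⟫_ℂ‖ := by
        rw [← inner_sub_left, ← sub_apply, CFC.posPart_sub_negPart Z]
    _ ≤ ‖⟪Z⁺ w, w'⟫_ℂ‖ + ‖⟪Z⁻ w, w'⟫_ℂ‖ := norm_sub_le _ _
    _ ≤ √(⟪Z⁺ w, w⟫_ℂ).re * √(⟪Z⁺ w', w'⟫_ℂ).re
          + √(⟪Z⁻ w, w⟫_ℂ).re * √(⟪Z⁻ w', w'⟫_ℂ).re :=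
        add_le_add (norm_inner_le_sqrt_mul_sqrt_of_nonneg hpos w w')
          (norm_inner_le_sqrt_mul_sqrt_of_nonneg hneg w w')
    _ ≤ √(⟪CFC.abs Z w, w⟫_ℂ).re * √(⟪CFC.abs Z w', w'⟫_ℂ).re := by
        rw [habs, habs]
        simpa [Fin.sum_univ_two] using Real.sum_sqrt_mul_sqrt_le Finset.univ
          (f := ![(⟪Z⁺ w, w⟫_ℂ).re, (⟪Z⁻ w, w⟫_ℂ).re])
          (g := ![(⟪Z⁺ w', w'⟫_ℂ).re, (⟪Z⁻ w', w'⟫_ℂ).re])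
          (by simp [Fin.forall_fin_two, hre_nonneg hpos, hre_nonneg hneg])
          (by simp [Fin.forall_fin_two, hre_nonneg hpos, hre_nonneg hneg])

end

section

variable {H : Type*} [NormedAddCommGroup H] [InnerProductSpace ℂ H]

noncomputable def blockOp (a b c d : H →L[ℂ] H) :
    WithLp 2 (H × H) →L[ℂ] WithLp 2 (H × H) :=
  (WithLp.prodContinuousLinearEquiv 2 ℂ H H).symm.toContinuousLinearMap ∘L
    ((a.coprod b).prod (c.coprod d)) ∘L
      (WithLp.prodContinuousLinearEquiv 2 ℂ H H).toContinuousLinearMap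

@[simp]
theorem blockOp_apply (a b c d : H →L[ℂ] H) (x y : H) :
    blockOp a b c d (WithLp.toLp 2 (x, y)) = WithLp.toLp 2 (a x + b y, c x + d y) :=
  rfl

theorem blockOp_mul (a b c d a' b' c' d' : H →L[ℂ] H) :
    blockOp a b c d * blockOp a' b' c' d' =
      blockOp (a * a' + b * c') (a * b' + b * d') (c * a' + d * c') (c * b' + d * d') := by
  ext ⟨x, y⟩
  simp only [mul_apply_eq_comp, blockOp_apply, add_apply, map_add, WithLp.toLp.injEq,
    Prod.mk.injEq]
  constructor <;> abel

variable [CompleteSpace H]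

theorem adjoint_blockOp (a b c d : H →L[ℂ] H) :
    adjoint (blockOp a b c d) = blockOp (adjoint a) (adjoint c) (adjoint b) (adjoint d) := by
  refine ((eq_adjoint_iff _ _).mpr ?_).symm
  rintro ⟨x, y⟩ ⟨x', y'⟩
  simp [inner_add_left, inner_add_right, adjoint_inner_left]
  ring

theorem blockOp_zero_zero_nonneg {a d : H →L[ℂ] H} (ha : 0 ≤ a) (hd : 0 ≤ d) :
    0 ≤ blockOp a 0 0 d := by
  obtain ⟨s, rfl⟩ := CStarAlgebra.nonneg_iff_eq_star_mul_self.mp ha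
  obtain ⟨t, rfl⟩ := CStarAlgebra.nonneg_iff_eq_star_mul_self.mp hd
  convert star_mul_self_nonneg (blockOp s 0 0 t) using 1
  simp [star_eq_adjoint, adjoint_blockOp, blockOp_mul]

theorem isSelfAdjoint_blockOp_zero_adjoint (X : H →L[ℂ] H) :
    IsSelfAdjoint (blockOp 0 (adjoint X) X 0) := by
  rw [isSelfAdjoint_iff', adjoint_blockOp, adjoint_adjoint, map_zero]

theorem cfcAbs_blockOp_zero_adjoint (X : H →L[ℂ] H) :
    CFC.abs (blockOp 0 (adjoint X) X 0) = blockOp (CFC.abs X) 0 0 (CFC.abs (adjoint X)) := by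
  refine CFC.sqrt_unique ?_ (blockOp_zero_zero_nonneg (CFC.abs_nonneg X) (CFC.abs_nonneg _))
  rw [(isSelfAdjoint_blockOp_zero_adjoint X).star_eq, blockOp_mul, blockOp_mul, CFC.abs_mul_abs,
    CFC.abs_mul_abs, star_eq_adjoint, star_eq_adjoint, adjoint_adjoint]
  simp

theorem ContinuousLinearMap.norm_inner_le_sqrt_abs_mul_sqrt_abs_adjoint (X : H →L[ℂ] H)
    (u v : H) :
    ‖⟪X u, v⟫_ℂ‖ ≤ √(⟪CFC.abs X u, u⟫_ℂ).re * √(⟪CFC.abs (adjoint X) v, v⟫_ℂ).re := by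
  simpa [cfcAbs_blockOp_zero_adjoint] using
    (isSelfAdjoint_blockOp_zero_adjoint X).norm_inner_le_sqrt_mul_sqrt_abs
      (WithLp.toLp 2 (u, 0)) (WithLp.toLp 2 (0, v))

theorem opAbs_eq_cfcAbs (T : H →L[ℂ] H) : opAbs T = CFC.abs T :=
  rfl

end

theorem Real.sqrt_mul_sqrt_le_one_div_sqrt_two_mul_sqrt_sq_add_sq {a b : ℝ} (ha : 0 ≤ a) :
    √a * √b ≤ 1 / √2 * √(a ^ 2 + b ^ 2) := by
  rw [← Real.sqrt_mul ha, one_div, ← Real.sqrt_inv, ← Real.sqrt_mul (by positivity)]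
  exact Real.sqrt_le_sqrt (by nlinarith [sq_nonneg (a - b)])

section

variable {H : Type*} [NormedAddCommGroup H] [InnerProductSpace ℂ H] {Ω : Type*}

theorem ber_nonneg (k : Ω → H) (T : H →L[ℂ] H) : 0 ≤ ber k T :=
  Real.iSup_nonneg fun _ => norm_nonneg _

theorem norm_inner_le_ber {k : Ω → H} (hk : ∀ lam, ‖k lam‖ ≤ 1) (T : H →L[ℂ] H) (lam : Ω) :
    ‖⟪T (k lam), k lam⟫_ℂ‖ ≤ ber k T := by
  refine le_ciSup (f := fun μ => ‖⟪T (k μ), k μ⟫_ℂ‖)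
    ⟨‖T‖, Set.forall_mem_range.mpr fun μ => ?_⟩ lam
  calc ‖⟪T (k μ), k μ⟫_ℂ‖ ≤ ‖T (k μ)‖ * ‖k μ‖ := norm_inner_le_norm _ _
    _ ≤ ‖T‖ * 1 * 1 := by gcongr; exacts [T.le_opNorm_of_le (hk μ), hk μ]
    _ = ‖T‖ := by ring

end

theorem berezin_triple_product_abs_general
    {H : Type*} [NormedAddCommGroup H] [InnerProductSpace ℂ H] [CompleteSpace H]
    {Ω : Type*} (k : Ω → H) (hk : ∀ lam, ‖k lam‖ = 1)
    (A B X : H →L[ℂ] H) :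
    ber k (adjoint A * X * B) ≤
      (1 / Real.sqrt 2)
        * ber k (adjoint B * opAbs X * B
            + Complex.I • (adjoint A * opAbs (adjoint X) * A)) := by
  rw [opAbs_eq_cfcAbs, opAbs_eq_cfcAbs]
  set R := adjoint B * CFC.abs X * B + Complex.I • (adjoint A * CFC.abs (adjoint X) * A)
  refine Real.iSup_le (fun lam => ?_) (mul_nonneg (by positivity) (ber_nonneg k R))
  set a := (⟪CFC.abs X (B (k lam)), B (k lam)⟫_ℂ).re
  set b := (⟪CFC.abs (adjoint X) (A (k lam)), A (k lam)⟫_ℂ).re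
  have hR : ⟪R (k lam), k lam⟫_ℂ = a + (-b : ℝ) * Complex.I := by
    simp only [R, add_apply, smul_apply, inner_add_left, inner_smul_left, mul_apply_eq_comp,
      adjoint_inner_left, Complex.conj_I]
    rw [inner_apply_self_eq_re_of_nonneg (CFC.abs_nonneg X),
      inner_apply_self_eq_re_of_nonneg (CFC.abs_nonneg (adjoint X))]
    push_cast
    ring
  calc ‖⟪(adjoint A * X * B) (k lam), k lam⟫_ℂ‖ = ‖⟪X (B (k lam)), A (k lam)⟫_ℂ‖ := by
        rw [mul_apply_eq_comp, mul_apply_eq_comp, adjoint_inner_left]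
    _ ≤ √a * √b := norm_inner_le_sqrt_abs_mul_sqrt_abs_adjoint X _ _
    _ ≤ 1 / √2 * √(a ^ 2 + (-b) ^ 2) := by
        rw [neg_sq]
        exact Real.sqrt_mul_sqrt_le_one_div_sqrt_two_mul_sqrt_sq_add_sq
          (((nonneg_iff_isPositive (CFC.abs X)).mp (CFC.abs_nonneg X)).re_inner_nonneg_left _)
    _ = 1 / √2 * ‖⟪R (k lam), k lam⟫_ℂ‖ := by rw [hR, Complex.norm_add_mul_I]
    _ ≤ 1 / √2 * ber k R := by gcongr; exact norm_inner_le_ber (fun lam => (hk lam).le) R lam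

theorem berezin_triple_product_abs
    {H : Type*} [NormedAddCommGroup H] [InnerProductSpace ℂ H] [CompleteSpace H]
    {Ω : Type*} [Nonempty Ω] (k : Ω → H) (hk : ∀ lam, ‖k lam‖ = 1)
    (A B X : H →L[ℂ] H) :
    ber k (adjoint A * X * B) ≤
      (1 / Real.sqrt 2)
        * ber k (adjoint B * opAbs X * B
            + Complex.I • (adjoint A * opAbs (adjoint X) * A)) :=
  berezin_triple_product_abs_general k hk A B X
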